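/- arXiv:2006.16950 — 2 statements merged into one kernel-verified Lean document; each statement's English description precedes it below -/
import Mathlib

section
/- Let B = (μ_1,…,μ_K) be a K-armed Bernoulli bandit with K ≥ 2 whose arm means are pairwise distinct, and let δ_B = μ*_B − (the second-largest arm mean), so δ_B > 0. Let M be a probabilistic finite automaton playing B and ε > 0 a real number such that, for every state q of M, the probability (starting the run from q) that a non-optimal arm is played at q or at the immediately following state is at least ε. Then for every time step T ≥ 1, E[μ_{a_T} + μ_{a_{T+1}}] ≤ 2 μ*_B − ε · δ_B, where a_t is the arm M plays at step t when run on B. -/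
open Filter

structure PFA (Q : Type) [Fintype Q] (K : ℕ) where
  q0 : Q
  act : Q → Fin K → ℝ
  act_nonneg : ∀ q a, 0 ≤ act q a
  act_sum_one : ∀ q, ∑ a, act q a = 1
  trans : Q → Fin K × Bool → Q → ℝ
  trans_nonneg : ∀ q o q', 0 ≤ trans q o q'
  trans_sum_one : ∀ q o, ∑ q', trans q o q' = 1

noncomputable def stateDist {Q : Type} [Fintype Q] [DecidableEq Q] {K : ℕ}
    (M : PFA Q K) (B : Fin K → ℝ) : ℕ → Q → ℝ
  | 0 => fun q => if q = M.q0 then 1 else 0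
  | n + 1 => fun q' => ∑ q, stateDist M B n q *
      ∑ a, M.act q a * (B a * M.trans q (a, true) q' + (1 - B a) * M.trans q (a, false) q')

noncomputable def expReward {Q : Type} [Fintype Q] [DecidableEq Q] {K : ℕ}
    (M : PFA Q K) (B : Fin K → ℝ) (t : ℕ) : ℝ :=
  ∑ q, stateDist M B t q * ∑ a, M.act q a * B a

noncomputable def muStar {K : ℕ} (B : Fin K → ℝ) : ℝ := ⨆ k, B k

noncomputable def Reg {Q : Type} [Fintype Q] [DecidableEq Q] {K : ℕ}
    (M : PFA Q K) (B : Fin K → ℝ) (N : ℕ) : ℝ :=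
  N * muStar B - ∑ t ∈ Finset.range N, expReward M B t

def IsBandit {K : ℕ} (B : Fin K → ℝ) : Prop := ∀ k, 0 ≤ B k ∧ B k ≤ 1

def Generic {K : ℕ} (B : Fin K → ℝ) : Prop :=
  muStar B < 1 ∧ (∀ i j : Fin K, i ≠ j → B i ≠ B j) ∧ (K = 2 → ∀ k, 0 < B k)

def IsPermOf {K : ℕ} (B B' : Fin K → ℝ) : Prop :=
  ∃ ρ : Equiv.Perm (Fin K), ∀ k, B k = B' (ρ k)

/-- The second-largest arm mean: the supremum of the means of the non-optimal arms. -/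
noncomputable def secondMax {K : ℕ} (B : Fin K → ℝ) : ℝ :=
  ⨆ k : {k : Fin K // B k < muStar B}, B k.1

/-- The probability that an optimal arm is played at state `q`. -/
noncomputable def optPlayProb {Q : Type} [Fintype Q] [DecidableEq Q] {K : ℕ}
    (M : PFA Q K) (B : Fin K → ℝ) (q : Q) : ℝ :=
  ∑ a, (if B a = muStar B then M.act q a else 0)

/-- Starting the run of `M` on `B` from state `q`, the probability that an optimal arm
is played both at `q` and at the immediately following state. -/
noncomputable def twoStepOptProb {Q : Type} [Fintype Q] [DecidableEq Q] {K : ℕ}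
    (M : PFA Q K) (B : Fin K → ℝ) (q : Q) : ℝ :=
  ∑ a, (if B a = muStar B then M.act q a else 0) *
    ∑ q', (B a * M.trans q (a, true) q' + (1 - B a) * M.trans q (a, false) q') *
      optPlayProb M B q'

/-- Starting the run of `M` on `B` from state `q`, the probability that a non-optimal arm
is played at `q` or at the immediately following state. -/
noncomputable def twoStepBadProb {Q : Type} [Fintype Q] [DecidableEq Q] {K : ℕ}
    (M : PFA Q K) (B : Fin K → ℝ) (q : Q) : ℝ :=
  1 - twoStepOptProb M B q


section Aux

variable {Q : Type} [Fintype Q] [DecidableEq Q] {K : ℕ}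

lemma stateDist_nonneg (M : PFA Q K) (B : Fin K → ℝ) (hB : IsBandit B) :
    ∀ n q, 0 ≤ stateDist M B n q := by
  intro n
  induction n with
  | zero =>
    intro q
    simp only [stateDist]
    split <;> norm_num
  | succ n ih =>
    intro q
    simp only [stateDist]
    refine Finset.sum_nonneg fun q' _ => mul_nonneg (ih q') ?_
    refine Finset.sum_nonneg fun a _ => mul_nonneg (M.act_nonneg _ _) ?_
    exact add_nonneg (mul_nonneg (hB a).1 (M.trans_nonneg _ _ _))
      (mul_nonneg (by linarith [(hB a).2]) (M.trans_nonneg _ _ _))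

lemma stateDist_sum_one (M : PFA Q K) (B : Fin K → ℝ) :
    ∀ n, ∑ q, stateDist M B n q = 1 := by
  intro n
  induction n with
  | zero => simp [stateDist]
  | succ n ih =>
    simp only [stateDist]
    rw [Finset.sum_comm]
    calc ∑ q, ∑ q', stateDist M B n q *
          ∑ a, M.act q a * (B a * M.trans q (a, true) q' + (1 - B a) * M.trans q (a, false) q')
        = ∑ q, stateDist M B n q * ∑ a, M.act q a *
            (B a * ∑ q', M.trans q (a, true) q' + (1 - B a) * ∑ q', M.trans q (a, false) q') := by
          refine Finset.sum_congr rfl fun q _ => ?_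
          rw [← Finset.mul_sum]
          congr 1
          rw [Finset.sum_comm]
          refine Finset.sum_congr rfl fun a _ => ?_
          rw [← Finset.mul_sum]
          congr 1
          rw [Finset.mul_sum, Finset.mul_sum, ← Finset.sum_add_distrib]
      _ = 1 := by
          simp only [M.trans_sum_one, mul_one]
          simp only [show ∀ a : Fin K, B a + (1 - B a) = 1 from fun a => by ring, mul_one,
            M.act_sum_one, mul_one, ih]

/-- Per-state two-step bound. -/
lemma key_bound (M : PFA Q K) (B : Fin K → ℝ) (hB : IsBandit B)
    (hmu : ∀ k, B k ≤ muStar B)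
    (hs : ∀ k, B k ≠ muStar B → B k ≤ secondMax B)
    (hd : secondMax B ≤ muStar B)
    (ε : ℝ) (hbad : ∀ q : Q, ε ≤ twoStepBadProb M B q) (q : Q) :
    (∑ a, M.act q a * B a) +
      ∑ q', (∑ a, M.act q a * (B a * M.trans q (a, true) q' + (1 - B a) * M.trans q (a, false) q')) *
        (∑ a, M.act q' a * B a) ≤
      2 * muStar B - ε * (muStar B - secondMax B) := by
  set μ := muStar B with hμdef
  set s := secondMax B with hsdef
  -- reward at a state is at most s + (μ - s) * optPlayProb
  have hr : ∀ q' : Q, (∑ a, M.act q' a * B a) ≤ s + (μ - s) * optPlayProb M B q' := by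
    intro q'
    have h1 : ∀ a : Fin K, M.act q' a * B a ≤
        s * M.act q' a + (μ - s) * (if B a = μ then M.act q' a else 0) := by
      intro a
      by_cases h : B a = μ
      · rw [if_pos h, h]
        nlinarith [M.act_nonneg q' a]
      · rw [if_neg h, mul_zero, add_zero]
        nlinarith [M.act_nonneg q' a, hs a h]
    calc (∑ a, M.act q' a * B a)
        ≤ ∑ a, (s * M.act q' a + (μ - s) * (if B a = μ then M.act q' a else 0)) :=
          Finset.sum_le_sum fun a _ => h1 a
      _ = s + (μ - s) * optPlayProb M B q' := by
          rw [Finset.sum_add_distrib, ← Finset.mul_sum, ← Finset.mul_sum, M.act_sum_one,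
            mul_one, optPlayProb]
  -- reward at a state is at most μ
  have hrμ : ∀ q' : Q, (∑ a, M.act q' a * B a) ≤ μ := by
    intro q'
    calc (∑ a, M.act q' a * B a) ≤ ∑ a, M.act q' a * μ :=
          Finset.sum_le_sum fun a _ => mul_le_mul_of_nonneg_left (hmu a) (M.act_nonneg q' a)
      _ = μ := by rw [← Finset.sum_mul, M.act_sum_one, one_mul]
  -- per-arm transition kernel facts
  have hPa_nonneg : ∀ (a : Fin K) (q' : Q),
      0 ≤ B a * M.trans q (a, true) q' + (1 - B a) * M.trans q (a, false) q' := by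
    intro a q'
    exact add_nonneg (mul_nonneg (hB a).1 (M.trans_nonneg _ _ _))
      (mul_nonneg (by linarith [(hB a).2]) (M.trans_nonneg _ _ _))
  have hPa_sum : ∀ a : Fin K,
      ∑ q', (B a * M.trans q (a, true) q' + (1 - B a) * M.trans q (a, false) q') = 1 := by
    intro a
    rw [Finset.sum_add_distrib, ← Finset.mul_sum, ← Finset.mul_sum, M.trans_sum_one,
      M.trans_sum_one]
    ring
  -- swap sums in the second term
  have hswap : ∑ q', (∑ a, M.act q a *
        (B a * M.trans q (a, true) q' + (1 - B a) * M.trans q (a, false) q')) *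
        (∑ a, M.act q' a * B a)
      = ∑ a, M.act q a * ∑ q',
          (B a * M.trans q (a, true) q' + (1 - B a) * M.trans q (a, false) q') *
          (∑ b, M.act q' b * B b) := by
    calc ∑ q', (∑ a, M.act q a *
          (B a * M.trans q (a, true) q' + (1 - B a) * M.trans q (a, false) q')) *
          (∑ a, M.act q' a * B a)
        = ∑ q', ∑ a, M.act q a *
            ((B a * M.trans q (a, true) q' + (1 - B a) * M.trans q (a, false) q') *
              (∑ b, M.act q' b * B b)) := by
          refine Finset.sum_congr rfl fun q' _ => ?_
          rw [Finset.sum_mul]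
          exact Finset.sum_congr rfl fun a _ => by ring
      _ = ∑ a, ∑ q', M.act q a *
            ((B a * M.trans q (a, true) q' + (1 - B a) * M.trans q (a, false) q') *
              (∑ b, M.act q' b * B b)) := Finset.sum_comm
      _ = ∑ a, M.act q a * ∑ q',
            (B a * M.trans q (a, true) q' + (1 - B a) * M.trans q (a, false) q') *
            (∑ b, M.act q' b * B b) := by
          exact Finset.sum_congr rfl fun a _ => (Finset.mul_sum _ _ _).symm
  -- per-arm bound
  have harm : ∀ a : Fin K, M.act q a * (B a + ∑ q',
        (B a * M.trans q (a, true) q' + (1 - B a) * M.trans q (a, false) q') *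
        (∑ b, M.act q' b * B b))
      ≤ M.act q a * (μ + s) + (μ - s) * ((if B a = μ then M.act q a else 0) *
          ∑ q', (B a * M.trans q (a, true) q' + (1 - B a) * M.trans q (a, false) q') *
            optPlayProb M B q') := by
    intro a
    by_cases h : B a = μ
    · rw [if_pos h]
      have hsum : ∑ q', (B a * M.trans q (a, true) q' + (1 - B a) * M.trans q (a, false) q') *
            (∑ b, M.act q' b * B b)
          ≤ s + (μ - s) * ∑ q',
              (B a * M.trans q (a, true) q' + (1 - B a) * M.trans q (a, false) q') *
              optPlayProb M B q' := by
        calc ∑ q', (B a * M.trans q (a, true) q' + (1 - B a) * M.trans q (a, false) q') *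
              (∑ b, M.act q' b * B b)
            ≤ ∑ q', (B a * M.trans q (a, true) q' + (1 - B a) * M.trans q (a, false) q') *
                (s + (μ - s) * optPlayProb M B q') :=
              Finset.sum_le_sum fun q' _ =>
                mul_le_mul_of_nonneg_left (hr q') (hPa_nonneg a q')
          _ = (∑ q', (B a * M.trans q (a, true) q' + (1 - B a) * M.trans q (a, false) q')) * s
              + (μ - s) * ∑ q',
                  (B a * M.trans q (a, true) q' + (1 - B a) * M.trans q (a, false) q') *
                  optPlayProb M B q' := by
              rw [Finset.sum_mul, Finset.mul_sum, ← Finset.sum_add_distrib]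
              exact Finset.sum_congr rfl fun q' _ => by ring
          _ = s + (μ - s) * ∑ q',
                (B a * M.trans q (a, true) q' + (1 - B a) * M.trans q (a, false) q') *
                optPlayProb M B q' := by rw [hPa_sum a, one_mul]
      have hact := M.act_nonneg q a
      nlinarith [hsum, h]
    · rw [if_neg h, zero_mul, mul_zero, add_zero]
      have hsum : ∑ q', (B a * M.trans q (a, true) q' + (1 - B a) * M.trans q (a, false) q') *
            (∑ b, M.act q' b * B b) ≤ μ := by
        calc ∑ q', (B a * M.trans q (a, true) q' + (1 - B a) * M.trans q (a, false) q') *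
              (∑ b, M.act q' b * B b)
            ≤ ∑ q', (B a * M.trans q (a, true) q' + (1 - B a) * M.trans q (a, false) q') * μ :=
              Finset.sum_le_sum fun q' _ =>
                mul_le_mul_of_nonneg_left (hrμ q') (hPa_nonneg a q')
          _ = μ := by rw [← Finset.sum_mul, hPa_sum a, one_mul]
      have hBa : B a ≤ s := hs a h
      nlinarith [M.act_nonneg q a, hsum]
  -- put everything together
  have htot : (∑ a, M.act q a * B a) +
      ∑ q', (∑ a, M.act q a *
        (B a * M.trans q (a, true) q' + (1 - B a) * M.trans q (a, false) q')) *
        (∑ a, M.act q' a * B a)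
      ≤ (μ + s) + (μ - s) * twoStepOptProb M B q := by
    rw [hswap, ← Finset.sum_add_distrib]
    calc ∑ a, (M.act q a * B a + M.act q a * ∑ q',
          (B a * M.trans q (a, true) q' + (1 - B a) * M.trans q (a, false) q') *
          (∑ b, M.act q' b * B b))
        ≤ ∑ a, (M.act q a * (μ + s) + (μ - s) * ((if B a = μ then M.act q a else 0) *
            ∑ q', (B a * M.trans q (a, true) q' + (1 - B a) * M.trans q (a, false) q') *
              optPlayProb M B q')) := by
          refine Finset.sum_le_sum fun a _ => ?_
          have := harm a
          linarith [harm a, mul_add (M.act q a) (B a) (∑ q',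
            (B a * M.trans q (a, true) q' + (1 - B a) * M.trans q (a, false) q') *
            (∑ b, M.act q' b * B b))]
      _ = (μ + s) + (μ - s) * twoStepOptProb M B q := by
          rw [Finset.sum_add_distrib, ← Finset.sum_mul, M.act_sum_one, one_mul,
            ← Finset.mul_sum, twoStepOptProb]
  have hbadq := hbad q
  have hbd : twoStepBadProb M B q = 1 - twoStepOptProb M B q := rfl
  have hmul : (μ - s) * ε ≤ (μ - s) * twoStepBadProb M B q :=
    mul_le_mul_of_nonneg_left hbadq (by linarith)
  have hexpand : (μ - s) * twoStepBadProb M B q = (μ - s) - (μ - s) * twoStepOptProb M B q := by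
    rw [hbd]; ring
  nlinarith [htot, hmul, hexpand]

end Aux

/-- Let `B` have pairwise distinct arm means, `K ≥ 2`, and
`δ_B = μ*_B − secondMax B > 0`. If `M` is a PFA such that from every state `q` the
probability that a non-optimal arm is played at `q` or at the immediately following state
is at least `ε > 0`, then for every step `T ≥ 1`,
`E[μ_{a_T} + μ_{a_{T+1}}] ≤ 2 μ*_B − ε δ_B`.
(Here `expReward M B t = E[μ_{a_{t+1}}]`, so the claim is stated for indices `T, T+1`.) -/
theorem twoStep_reward_bound {K : ℕ} (hK : 2 ≤ K) {Q : Type} [Fintype Q] [DecidableEq Q]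
    (M : PFA Q K) (B : Fin K → ℝ) (hB : IsBandit B)
    (hdist : ∀ i j : Fin K, i ≠ j → B i ≠ B j)
    (ε : ℝ) (hε : 0 < ε)
    (hbad : ∀ q : Q, ε ≤ twoStepBadProb M B q)
    (T : ℕ) :
    expReward M B T + expReward M B (T + 1) ≤
      2 * muStar B - ε * (muStar B - secondMax B) := by
  have hKpos : 0 < K := by omega
  have hfne : Nonempty (Fin K) := ⟨⟨0, hKpos⟩⟩
  have hmu : ∀ k, B k ≤ muStar B := fun k =>
    le_ciSup (Set.Finite.bddAbove (Set.finite_range B)) k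
  obtain ⟨k0, hk0⟩ : ∃ k, B k < muStar B := by
    have hne : (⟨0, by omega⟩ : Fin K) ≠ ⟨1, by omega⟩ := by simp [Fin.ext_iff]
    have h01 := hdist _ _ hne
    by_cases h : B ⟨0, by omega⟩ = muStar B
    · exact ⟨⟨1, by omega⟩, lt_of_le_of_ne (hmu _) (fun he => h01 (by rw [h, he]))⟩
    · exact ⟨⟨0, by omega⟩, lt_of_le_of_ne (hmu _) h⟩
  have hnsub : Nonempty {k : Fin K // B k < muStar B} := ⟨⟨k0, hk0⟩⟩
  have hbdd : BddAbove (Set.range fun k : {k : Fin K // B k < muStar B} => B k.1) :=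
    Set.Finite.bddAbove (Set.finite_range _)
  have hs : ∀ k, B k ≠ muStar B → B k ≤ secondMax B := fun k h =>
    le_ciSup hbdd (⟨k, lt_of_le_of_ne (hmu k) h⟩ : {k : Fin K // B k < muStar B})
  have hd : secondMax B ≤ muStar B := ciSup_le fun k => hmu k.1
  have hexp : expReward M B T + expReward M B (T + 1) =
      ∑ q, stateDist M B T q * ((∑ a, M.act q a * B a) +
        ∑ q', (∑ a, M.act q a *
          (B a * M.trans q (a, true) q' + (1 - B a) * M.trans q (a, false) q')) *
          (∑ a, M.act q' a * B a)) := by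
    have h2 : expReward M B (T + 1) = ∑ q, stateDist M B T q *
        ∑ q', (∑ a, M.act q a *
          (B a * M.trans q (a, true) q' + (1 - B a) * M.trans q (a, false) q')) *
          (∑ a, M.act q' a * B a) := by
      show (∑ q', stateDist M B (T + 1) q' * ∑ a, M.act q' a * B a) = _
      simp only [stateDist]
      calc ∑ q', (∑ q, stateDist M B T q * ∑ a, M.act q a *
            (B a * M.trans q (a, true) q' + (1 - B a) * M.trans q (a, false) q')) *
            (∑ a, M.act q' a * B a)
          = ∑ q', ∑ q, stateDist M B T q * ((∑ a, M.act q a *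
              (B a * M.trans q (a, true) q' + (1 - B a) * M.trans q (a, false) q')) *
              (∑ a, M.act q' a * B a)) := by
            refine Finset.sum_congr rfl fun q' _ => ?_
            rw [Finset.sum_mul]
            exact Finset.sum_congr rfl fun q _ => by ring
        _ = ∑ q, ∑ q', stateDist M B T q * ((∑ a, M.act q a *
              (B a * M.trans q (a, true) q' + (1 - B a) * M.trans q (a, false) q')) *
              (∑ a, M.act q' a * B a)) := Finset.sum_comm
        _ = ∑ q, stateDist M B T q * ∑ q', (∑ a, M.act q a *
              (B a * M.trans q (a, true) q' + (1 - B a) * M.trans q (a, false) q')) *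
              (∑ a, M.act q' a * B a) := by
            exact Finset.sum_congr rfl fun q _ => (Finset.mul_sum _ _ _).symm
    rw [h2]
    show (∑ q, stateDist M B T q * ∑ a, M.act q a * B a) + _ = _
    rw [← Finset.sum_add_distrib]
    exact Finset.sum_congr rfl fun q _ => (mul_add _ _ _).symm
  rw [hexp]
  calc ∑ q, stateDist M B T q * ((∑ a, M.act q a * B a) +
        ∑ q', (∑ a, M.act q a *
          (B a * M.trans q (a, true) q' + (1 - B a) * M.trans q (a, false) q')) *
          (∑ a, M.act q' a * B a))
      ≤ ∑ q, stateDist M B T q * (2 * muStar B - ε * (muStar B - secondMax B)) :=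
        Finset.sum_le_sum fun q _ => mul_le_mul_of_nonneg_left
          (key_bound M B hB hmu hs hd ε hbad q) (stateDist_nonneg M B hB T q)
    _ = 2 * muStar B - ε * (muStar B - secondMax B) := by
        rw [← Finset.sum_mul, stateDist_sum_one, one_mul]
end

section
/- Consider the explore-then-exploit protocol with parameter N ≥ 1: it first plays each of the K arms exactly N times, and from then on always plays an arm whose empirical success rate over the exploration phase is highest (breaking ties by some fixed rule). Let B = (μ_1,…,μ_K) be a K-armed Bernoulli bandit with 0 < μ_k < 1 for all k and with a non-optimal arm j (i.e., μ_j < μ*_B). Then liminf_{T→∞} Reg(P,B,T)/T ≥ μ_j^N · (∏_{i≠j} (1−μ_i)^N) · (μ*_B − μ_j) > 0; in particular, explore-then-exploit is not optimal. -/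
/-- A probability vector over the `K` arms. -/
def ProbVec {K : ℕ} (p : Fin K → ℝ) : Prop := (∀ a, 0 ≤ p a) ∧ ∑ a, p a = 1

/-- Histories are lists of (arm, reward) observations, most recent observation first.
`histProb P B h` is the probability, when running the protocol `P` on the bandit `B`,
that the first `h.length` observations are exactly `h`. -/
noncomputable def histProb {K : ℕ} (P : List (Fin K × Bool) → Fin K → ℝ)
    (B : Fin K → ℝ) : List (Fin K × Bool) → ℝ
  | [] => 1
  | (a, r) :: h => histProb P B h * P h a * (if r then B a else 1 - B a)

/-- `protExpReward P B t = E[μ_{a_{t+1}}]`, the expected reward of the protocol `P` on the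
bandit `B` at step `t+1` (after `t` observations); histories of length `t` are enumerated
as functions `Fin t → Fin K × Bool` (most recent observation first). -/
noncomputable def protExpReward {K : ℕ} (P : List (Fin K × Bool) → Fin K → ℝ)
    (B : Fin K → ℝ) (t : ℕ) : ℝ :=
  ∑ f : Fin t → Fin K × Bool,
    histProb P B (List.ofFn f) * ∑ a, P (List.ofFn f) a * B a

/-- The expected regret of the protocol `P` on the bandit `B` after `N` steps. -/
noncomputable def protReg {K : ℕ} (P : List (Fin K × Bool) → Fin K → ℝ)
    (B : Fin K → ℝ) (N : ℕ) : ℝ :=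
  N * muStar B - ∑ t ∈ Finset.range N, protExpReward P B t

/-- The empirical success rate of arm `k` in the history `h`: the fraction of the pulls of
arm `k` recorded in `h` that returned reward 1 (with the convention `0/0 = 0`). -/
noncomputable def empRate {K : ℕ} (h : List (Fin K × Bool)) (k : Fin K) : ℝ :=
  ((h.filter fun o => o.1 == k && o.2).length : ℝ) /
    ((h.filter fun o => o.1 == k).length : ℝ)

lemma histProb_nil {K : ℕ} (P : List (Fin K × Bool) → Fin K → ℝ) (B : Fin K → ℝ) :
    histProb P B [] = 1 := rfl

lemma histProb_cons {K : ℕ} (P : List (Fin K × Bool) → Fin K → ℝ) (B : Fin K → ℝ)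
    (o : Fin K × Bool) (h : List (Fin K × Bool)) :
    histProb P B (o :: h) = histProb P B h * P h o.1 * (if o.2 then B o.1 else 1 - B o.1) := by
  obtain ⟨a, r⟩ := o; rfl

def consEquiv (s : ℕ) (A : Type*) : A × (Fin s → A) ≃ (Fin (s+1) → A) where
  toFun p := Fin.cons p.1 p.2
  invFun g := (g 0, fun i => g i.succ)
  left_inv p := by simp
  right_inv g := by
    funext i
    refine Fin.cases ?_ ?_ i <;> simp

lemma histProb_nonneg {K : ℕ} (P : List (Fin K × Bool) → Fin K → ℝ) (B : Fin K → ℝ)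
    (hB : ∀ k, 0 ≤ B k ∧ B k ≤ 1) (hP : ∀ h a, 0 ≤ P h a) :
    ∀ h, 0 ≤ histProb P B h
  | [] => by simp [histProb_nil]
  | (a, r) :: h => by
    have ih := histProb_nonneg P B hB hP h
    rw [histProb_cons]
    apply mul_nonneg (mul_nonneg ih (hP h a))
    cases r <;> simp [(hB a).1, (hB a).2, sub_nonneg]

lemma sum_histProb_append {K : ℕ} (P : List (Fin K × Bool) → Fin K → ℝ) (B : Fin K → ℝ)
    (hP1 : ∀ h, ∑ a, P h a = 1) :
    ∀ (s : ℕ) (h₀ : List (Fin K × Bool)),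
      ∑ g : Fin s → Fin K × Bool, histProb P B (List.ofFn g ++ h₀) = histProb P B h₀ := by
  intro s
  induction s with
  | zero => intro h₀; simp
  | succ s IH =>
    intro h₀
    rw [← (consEquiv s (Fin K × Bool)).sum_comp
      (fun g => histProb P B (List.ofFn g ++ h₀))]
    have key : ∀ p : (Fin K × Bool) × (Fin s → Fin K × Bool),
        List.ofFn ((consEquiv s (Fin K × Bool)) p) ++ h₀ = p.1 :: (List.ofFn p.2 ++ h₀) := by
      intro p; simp [consEquiv, List.ofFn_succ]
    simp only [key, histProb_cons]
    rw [Fintype.sum_prod_type, Finset.sum_comm]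
    have inner : ∀ g' : Fin s → Fin K × Bool,
        ∑ o : Fin K × Bool, histProb P B (List.ofFn g' ++ h₀) * P (List.ofFn g' ++ h₀) o.1 *
          (if o.2 then B o.1 else 1 - B o.1) = histProb P B (List.ofFn g' ++ h₀) := by
      intro g'
      rw [Fintype.sum_prod_type]
      have hbool : ∀ a : Fin K,
          ∑ r : Bool, histProb P B (List.ofFn g' ++ h₀) * P (List.ofFn g' ++ h₀) a *
            (if r then B a else 1 - B a)
          = histProb P B (List.ofFn g' ++ h₀) * P (List.ofFn g' ++ h₀) a := by
        intro a; rw [Fintype.sum_bool]; simp; ring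
      rw [Finset.sum_congr rfl fun a _ => hbool a, ← Finset.mul_sum, hP1, mul_one]
    rw [Finset.sum_congr rfl fun g' _ => inner g', IH]

def explHist {K : ℕ} (explArm : ℕ → Fin K) (j : Fin K) : ℕ → List (Fin K × Bool)
  | 0 => []
  | n+1 => (explArm n, explArm n == j) :: explHist explArm j n

lemma explHist_length {K : ℕ} (explArm : ℕ → Fin K) (j : Fin K) :
    ∀ n, (explHist explArm j n).length = n
  | 0 => rfl
  | n+1 => by simp [explHist, explHist_length explArm j n]

lemma explHist_filter_arm {K : ℕ} (explArm : ℕ → Fin K) (j k : Fin K) :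
    ∀ n, ((explHist explArm j n).filter fun o => o.1 == k).length
      = ((List.range n).filter fun t => explArm t == k).length
  | 0 => rfl
  | n+1 => by
    rw [List.range_succ, List.filter_append]
    by_cases h : explArm n = k <;>
      simp [explHist, List.filter_cons, h, explHist_filter_arm explArm j k n]

lemma explHist_filter_succ {K : ℕ} (explArm : ℕ → Fin K) (j k : Fin K) :
    ∀ n, ((explHist explArm j n).filter fun o => o.1 == k && o.2).length
      = if k = j then ((List.range n).filter fun t => explArm t == k).length else 0
  | 0 => by simp [explHist]
  | n+1 => by
    rw [List.range_succ, List.filter_append]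
    by_cases hkj : k = j
    · subst hkj
      have hrec := explHist_filter_succ explArm k k n
      rw [if_pos rfl] at hrec
      by_cases h : explArm n = k <;>
        simp [explHist, List.filter_cons, h, hrec]
    · by_cases h : explArm n = k
      · have : ¬ (explArm n = j) := by rw [h]; exact hkj
        simp [explHist, List.filter_cons, h, this, explHist_filter_succ explArm j k n, hkj]
      · simp [explHist, List.filter_cons, h, explHist_filter_succ explArm j k n, hkj]

/-- Let `P` be the explore-then-exploit protocol with parameter `N ≥ 1`:
it first plays each of the `K` arms exactly `N` times (following a fixed exploration
schedule `explArm`), and from then on always plays an arm whose empirical success rate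
over the exploration phase (the oldest `K*N` observations, i.e. the suffix of the
most-recent-first history) is highest, breaking ties by a fixed rule `choose`. If
`0 < μ_k < 1` for all `k` and arm `j` is non-optimal, then
`liminf_{T→∞} Reg(P,B,T)/T ≥ μ_j^N · (∏_{i≠j} (1−μ_i)^N) · (μ*_B − μ_j) > 0`;
in particular, explore-then-exploit is not optimal. -/
theorem exploreThenExploit_not_optimal {K : ℕ} (hK : 2 ≤ K) (N : ℕ) (hN : 1 ≤ N)
    (B : Fin K → ℝ) (hB : ∀ k, 0 < B k ∧ B k < 1)
    (j : Fin K) (hj : B j < muStar B)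
    (P : List (Fin K × Bool) → Fin K → ℝ)
    (explArm : ℕ → Fin K)
    (hcount : ∀ k : Fin K, ((List.range (K * N)).filter fun t => explArm t == k).length = N)
    (hexplore : ∀ h : List (Fin K × Bool), h.length < K * N →
      ∀ a, P h a = if a = explArm h.length then 1 else 0)
    (choose : List (Fin K × Bool) → Fin K)
    (hchoose : ∀ h₀ : List (Fin K × Bool), ∀ b, empRate h₀ b ≤ empRate h₀ (choose h₀))
    (hexploit : ∀ h : List (Fin K × Bool), K * N ≤ h.length →
      ∀ a, P h a = if a = choose (h.drop (h.length - K * N)) then 1 else 0) :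
    B j ^ N * (∏ i ∈ Finset.univ.erase j, (1 - B i) ^ N) * (muStar B - B j) ≤
      Filter.liminf (fun T : ℕ => protReg P B T / (T : ℝ)) Filter.atTop ∧
    0 < B j ^ N * (∏ i ∈ Finset.univ.erase j, (1 - B i) ^ N) * (muStar B - B j) := by
  have hsub : 0 < muStar B - B j := sub_pos.2 hj
  have hμB : ∀ a, B a ≤ muStar B := fun a =>
    le_ciSup (Set.Finite.bddAbove (Set.finite_range B)) a
  have hP0 : ∀ h a, 0 ≤ P h a := by
    intro h a
    rcases lt_or_ge h.length (K*N) with hl | hl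
    · rw [hexplore h hl a]; split <;> norm_num
    · rw [hexploit h hl a]; split <;> norm_num
  have hP1 : ∀ h, ∑ a, P h a = 1 := by
    intro h
    rcases lt_or_ge h.length (K*N) with hl | hl
    · rw [Finset.sum_congr rfl fun a _ => hexplore h hl a]
      simp [Finset.sum_ite_eq']
    · rw [Finset.sum_congr rfl fun a _ => hexploit h hl a]
      simp [Finset.sum_ite_eq']
  have hhp0 : ∀ h, 0 ≤ histProb P B h :=
    histProb_nonneg P B (fun k => ⟨(hB k).1.le, (hB k).2.le⟩) hP0
  have htot : ∀ t : ℕ, ∑ f : Fin t → Fin K × Bool, histProb P B (List.ofFn f) = 1 := by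
    intro t
    have := sum_histProb_append P B hP1 t []
    simpa [histProb_nil] using this
  set c : ℝ := B j ^ N * (∏ i ∈ Finset.univ.erase j, (1 - B i) ^ N) with hc
  have hcpos : 0 < c := by
    apply mul_pos (pow_pos (hB j).1 N)
    exact Finset.prod_pos fun i _ => pow_pos (sub_pos.2 (hB i).2) N
  have hVle : ∀ h : List (Fin K × Bool), ∑ a, P h a * B a ≤ muStar B := by
    intro h
    calc ∑ a, P h a * B a ≤ ∑ a, P h a * muStar B :=
        Finset.sum_le_sum fun a _ => mul_le_mul_of_nonneg_left (hμB a) (hP0 h a)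
      _ = muStar B := by rw [← Finset.sum_mul, hP1, one_mul]
  have hV0 : ∀ h, 0 ≤ ∑ a, P h a * B a :=
    fun h => Finset.sum_nonneg fun a _ => mul_nonneg (hP0 h a) (hB a).1.le
  have hERdef : ∀ t : ℕ, protExpReward P B t
      = ∑ f : Fin t → Fin K × Bool, histProb P B (List.ofFn f) * ∑ a, P (List.ofFn f) a * B a :=
    fun t => rfl
  have hER_le : ∀ t, protExpReward P B t ≤ muStar B := by
    intro t
    rw [hERdef]
    calc (∑ f : Fin t → Fin K × Bool, histProb P B (List.ofFn f) * ∑ a, P (List.ofFn f) a * B a)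
        ≤ ∑ f : Fin t → Fin K × Bool, histProb P B (List.ofFn f) * muStar B :=
        Finset.sum_le_sum fun f _ => mul_le_mul_of_nonneg_left (hVle _) (hhp0 _)
      _ = muStar B := by rw [← Finset.sum_mul, htot, one_mul]
  have hER_0 : ∀ t, 0 ≤ protExpReward P B t := by
    intro t
    rw [hERdef]
    exact Finset.sum_nonneg fun f _ => mul_nonneg (hhp0 _) (hV0 _)
  -- the good exploration history
  set H : List (Fin K × Bool) := explHist explArm j (K*N) with hHdef
  have hHlen : H.length = K*N := explHist_length explArm j (K*N)
  have hH1 : ∀ n, n ≤ K*N → histProb P B (explHist explArm j n)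
      = ∏ t ∈ Finset.range n, (if explArm t = j then B j else 1 - B (explArm t)) := by
    intro n
    induction n with
    | zero => intro _; simp [explHist, histProb_nil]
    | succ n ih =>
      intro hn
      have hn' : n < K*N := lt_of_lt_of_le (Nat.lt_succ_self n) hn
      have hlen : (explHist explArm j n).length = n := explHist_length explArm j n
      have hPn : P (explHist explArm j n) (explArm n) = 1 := by
        rw [hexplore _ (by rw [hlen]; exact hn'), hlen, if_pos rfl]
      rw [Finset.prod_range_succ, ← ih hn'.le]
      show histProb P B ((explArm n, explArm n == j) :: explHist explArm j n) = _
      rw [histProb_cons]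
      simp only [hPn, mul_one]
      by_cases hcase : explArm n = j <;> simp [hcase]
  have hcardN : ∀ k : Fin K, ((Finset.range (K*N)).filter fun t => explArm t = k).card = N := by
    intro k
    have hbr : ((Finset.range (K*N)).filter fun t => explArm t = k).card
        = ((List.range (K*N)).filter fun t => explArm t == k).length := rfl
    rw [hbr, hcount]
  have hHP : histProb P B H = c := by
    rw [hHdef, hH1 (K*N) le_rfl, hc]
    rw [← Finset.prod_fiberwise_of_maps_to (fun x _ => Finset.mem_univ (explArm x))
      (fun t => if explArm t = j then B j else 1 - B (explArm t))]
    have hfib : ∀ k : Fin K, (∏ t ∈ (Finset.range (K*N)).filter fun t => explArm t = k,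
        (if explArm t = j then B j else 1 - B (explArm t)))
        = (if k = j then B j else 1 - B k) ^ N := by
      intro k
      rw [Finset.prod_congr rfl (fun t ht => ?_), Finset.prod_const, hcardN]
      obtain ⟨-, hek⟩ := Finset.mem_filter.1 ht
      rw [hek]
    rw [Finset.prod_congr rfl fun k _ => hfib k,
      ← Finset.mul_prod_erase Finset.univ _ (Finset.mem_univ j), if_pos rfl]
    congr 1
    exact Finset.prod_congr rfl fun i hi => by rw [if_neg (Finset.ne_of_mem_erase hi)]
  -- empirical rates on H
  have hdenom : ∀ k : Fin K, ((H.filter fun o => o.1 == k).length : ℕ) = N := by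
    intro k; rw [hHdef, explHist_filter_arm, hcount]
  have hrate_j : empRate H j = 1 := by
    rw [empRate, hdenom, hHdef, explHist_filter_succ, if_pos rfl, hcount]
    rw [div_self]
    exact Nat.cast_ne_zero.2 (by omega)
  have hrate_ne : ∀ k, k ≠ j → empRate H k = 0 := by
    intro k hk
    rw [empRate, hHdef, explHist_filter_succ, if_neg hk]
    simp
  have hchooseH : choose H = j := by
    by_contra hne
    have h1 := hchoose H j
    rw [hrate_j, hrate_ne _ hne] at h1
    linarith
  -- the key per-step bound
  have hkey : ∀ t : ℕ, K*N ≤ t →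
      protExpReward P B t ≤ muStar B - c * (muStar B - B j) := by
    intro t hle
    obtain ⟨s, rfl⟩ : ∃ s, t = s + K*N := ⟨t - K*N, (Nat.sub_add_cancel hle).symm⟩
    have hι : ∀ g : Fin s → Fin K × Bool,
        ∃ f : Fin (s + K*N) → Fin K × Bool, List.ofFn f = List.ofFn g ++ H := by
      intro g
      have hlen : (List.ofFn g ++ H).length = s + K*N := by
        rw [List.length_append, List.length_ofFn, hHlen]
      refine ⟨fun i => (List.ofFn g ++ H).get (Fin.cast hlen.symm i), ?_⟩
      apply List.ext_getElem
      · simp [hlen]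
      · intro i h1 h2
        simp [List.getElem_ofFn, List.get_eq_getElem, Fin.cast]
    choose ι hofn using hι
    have hinj : ∀ x ∈ (Finset.univ : Finset (Fin s → Fin K × Bool)),
        ∀ y ∈ Finset.univ, ι x = ι y → x = y := by
      intro x _ y _ hxy
      have hxy2 : List.ofFn x ++ H = List.ofFn y ++ H := by
        rw [← hofn, ← hofn, hxy]
      exact List.ofFn_injective (List.append_cancel_right hxy2)
    set E : Finset (Fin (s + K*N) → Fin K × Bool) :=
      Finset.univ.filter (fun f => (List.ofFn f).drop s = H) with hE
    have hmem : ∀ g, ι g ∈ E := by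
      intro g
      rw [hE, Finset.mem_filter]
      refine ⟨Finset.mem_univ _, ?_⟩
      rw [hofn]
      exact List.drop_left' (by simp)
    have hmass : c ≤ ∑ f ∈ E, histProb P B (List.ofFn f) := by
      have h1 : ∑ g : Fin s → Fin K × Bool, histProb P B (List.ofFn (ι g)) = c := by
        rw [Finset.sum_congr rfl fun g _ => by rw [hofn g],
          sum_histProb_append P B hP1 s H, hHP]
      have himg : ∑ f ∈ Finset.univ.image ι, histProb P B (List.ofFn f)
          = ∑ g : Fin s → Fin K × Bool, histProb P B (List.ofFn (ι g)) :=
        Finset.sum_image hinj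
      rw [← h1, ← himg]
      apply Finset.sum_le_sum_of_subset_of_nonneg
      · intro f hf
        rcases Finset.mem_image.1 hf with ⟨g, -, rfl⟩
        exact hmem g
      · intro f _ _; exact hhp0 _
    have hVE : ∀ f ∈ E, (∑ a, P (List.ofFn f) a * B a) = B j := by
      intro f hf
      have hdrop : (List.ofFn f).drop s = H := (Finset.mem_filter.1 hf).2
      have hlf : K*N ≤ (List.ofFn f).length := by simp
      have hPf : ∀ a, P (List.ofFn f) a = if a = j then 1 else 0 := by
        intro a
        rw [hexploit _ hlf a]
        have : (List.ofFn f).length - K*N = s := by simp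
        rw [this, hdrop, hchooseH]
      rw [Finset.sum_congr rfl fun a _ => by rw [hPf a]]
      simp [ite_mul, Finset.sum_ite_eq']
    -- split the sum
    have hsplit := Finset.sum_filter_add_sum_filter_not Finset.univ
      (fun f : Fin (s + K*N) → Fin K × Bool => (List.ofFn f).drop s = H)
      (fun f => histProb P B (List.ofFn f) * ∑ a, P (List.ofFn f) a * B a)
    have hsplit2 := Finset.sum_filter_add_sum_filter_not Finset.univ
      (fun f : Fin (s + K*N) → Fin K × Bool => (List.ofFn f).drop s = H)
      (fun f => histProb P B (List.ofFn f))
    rw [htot] at hsplit2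
    have hEfold : Finset.univ.filter
        (fun f : Fin (s + K*N) → Fin K × Bool => (List.ofFn f).drop s = H) = E := hE.symm
    rw [hEfold] at hsplit hsplit2
    rw [hERdef, ← hsplit]
    have hE1 : ∑ f ∈ E, histProb P B (List.ofFn f) * (∑ a, P (List.ofFn f) a * B a)
        = (∑ f ∈ E, histProb P B (List.ofFn f)) * B j := by
      rw [Finset.sum_mul]
      exact Finset.sum_congr rfl fun f hf => by rw [hVE f hf]
    have hE2 : ∑ f ∈ Finset.univ.filter
          (fun f : Fin (s + K*N) → Fin K × Bool => ¬ (List.ofFn f).drop s = H),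
          histProb P B (List.ofFn f) * (∑ a, P (List.ofFn f) a * B a)
        ≤ (∑ f ∈ Finset.univ.filter
            (fun f : Fin (s + K*N) → Fin K × Bool => ¬ (List.ofFn f).drop s = H),
            histProb P B (List.ofFn f)) * muStar B := by
      rw [Finset.sum_mul]
      exact Finset.sum_le_sum fun f _ => mul_le_mul_of_nonneg_left (hVle _) (hhp0 _)
    have hSC0 : 0 ≤ ∑ f ∈ Finset.univ.filter
        (fun f : Fin (s + K*N) → Fin K × Bool => ¬ (List.ofFn f).drop s = H),
        histProb P B (List.ofFn f) :=
      Finset.sum_nonneg fun f _ => hhp0 _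
    have hprod : 0 ≤ ((∑ f ∈ E, histProb P B (List.ofFn f)) - c) * (muStar B - B j) :=
      mul_nonneg (sub_nonneg.2 hmass) hsub.le
    have hmul : (∑ f ∈ E, histProb P B (List.ofFn f)
        + ∑ f ∈ Finset.univ.filter
            (fun f : Fin (s + K*N) → Fin K × Bool => ¬ (List.ofFn f).drop s = H),
            histProb P B (List.ofFn f)) * muStar B = muStar B := by
      rw [hsplit2, one_mul]
    nlinarith [hE1, hE2, hsplit2, hprod, hmul]
  -- regret lower bound
  have hreg : ∀ T : ℕ, K*N ≤ T →
      ((T : ℝ) - (K*N : ℕ)) * (c * (muStar B - B j)) ≤ protReg P B T := by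
    intro T hT
    have hsplit : ∑ t ∈ Finset.range T, protExpReward P B t
        = ∑ t ∈ Finset.Ico 0 (K*N), protExpReward P B t
          + ∑ t ∈ Finset.Ico (K*N) T, protExpReward P B t := by
      rw [Finset.sum_Ico_consecutive _ (Nat.zero_le _) hT, Finset.range_eq_Ico]
    have h1 : ∑ t ∈ Finset.Ico 0 (K*N), protExpReward P B t ≤ ((K*N : ℕ) : ℝ) * muStar B := by
      calc ∑ t ∈ Finset.Ico 0 (K*N), protExpReward P B t
          ≤ ∑ _t ∈ Finset.Ico 0 (K*N), muStar B := Finset.sum_le_sum fun t _ => hER_le t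
        _ = ((K*N : ℕ) : ℝ) * muStar B := by
            rw [Finset.sum_const, Nat.card_Ico, nsmul_eq_mul]; simp
    have h2 : ∑ t ∈ Finset.Ico (K*N) T, protExpReward P B t
        ≤ ((T : ℝ) - (K*N : ℕ)) * (muStar B - c * (muStar B - B j)) := by
      calc ∑ t ∈ Finset.Ico (K*N) T, protExpReward P B t
          ≤ ∑ _t ∈ Finset.Ico (K*N) T, (muStar B - c * (muStar B - B j)) :=
            Finset.sum_le_sum fun t htm => hkey t (Finset.mem_Ico.1 htm).1
        _ = ((T : ℝ) - (K*N : ℕ)) * (muStar B - c * (muStar B - B j)) := by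
            rw [Finset.sum_const, Nat.card_Ico, nsmul_eq_mul, Nat.cast_sub hT]
    rw [protReg, hsplit]
    nlinarith [h1, h2]
  refine ⟨?_, mul_pos hcpos hsub⟩
  set c' : ℝ := c * (muStar B - B j) with hc'
  have hc'pos : 0 < c' := mul_pos hcpos hsub
  have hgt : Filter.Tendsto (fun T : ℕ => c' - c' * ((K*N : ℕ) : ℝ) * (1 / (T:ℝ)))
      Filter.atTop (nhds c') := by
    have h0 := tendsto_one_div_atTop_nhds_zero_nat.const_mul (c' * ((K*N : ℕ) : ℝ))
    have := Filter.Tendsto.sub (tendsto_const_nhds (x := c') (f := Filter.atTop)) h0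
    simpa using this
  have hev : ∀ᶠ T : ℕ in Filter.atTop,
      c' - c' * ((K*N : ℕ) : ℝ) * (1 / (T:ℝ)) ≤ protReg P B T / (T : ℝ) := by
    filter_upwards [Filter.eventually_ge_atTop (K*N + 1)] with T hT
    have hT1 : 0 < (T : ℝ) := Nat.cast_pos.2 (by omega)
    have hTKN : K*N ≤ T := by omega
    have hrT := hreg T hTKN
    rw [le_div_iff₀ hT1]
    have hexpand : (c' - c' * ((K*N : ℕ) : ℝ) * (1 / (T:ℝ))) * (T:ℝ)
        = c' * (T:ℝ) - c' * ((K*N : ℕ) : ℝ) := by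
      field_simp
    rw [hexpand]
    nlinarith [hrT]
  have hbddg : Filter.IsBoundedUnder (· ≥ ·) Filter.atTop
      (fun T : ℕ => c' - c' * ((K*N : ℕ) : ℝ) * (1 / (T:ℝ))) :=
    hgt.isBoundedUnder_ge
  have hfle : ∀ T : ℕ, protReg P B T / (T : ℝ) ≤ muStar B := by
    intro T
    rcases Nat.eq_zero_or_pos T with rfl | hT
    · simp [protReg]
      exact le_trans (le_of_lt (hB j).1) (hμB j)
    have hT1 : 0 < (T : ℝ) := Nat.cast_pos.2 hT
    rw [div_le_iff₀ hT1, protReg]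
    have : 0 ≤ ∑ t ∈ Finset.range T, protExpReward P B t :=
      Finset.sum_nonneg fun t _ => hER_0 t
    nlinarith [this]
  have hcobf : Filter.IsCoboundedUnder (· ≥ ·) Filter.atTop
      (fun T : ℕ => protReg P B T / (T : ℝ)) := by
    apply Filter.IsBoundedUnder.isCoboundedUnder_ge
    exact ⟨muStar B, Filter.eventually_map.2 (Filter.Eventually.of_forall hfle)⟩
  calc c * (muStar B - B j)
      = Filter.liminf (fun T : ℕ => c' - c' * ((K*N : ℕ) : ℝ) * (1 / (T:ℝ)))
        Filter.atTop := by rw [hgt.liminf_eq, hc']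
    _ ≤ Filter.liminf (fun T : ℕ => protReg P B T / (T : ℝ)) Filter.atTop :=
        Filter.liminf_le_liminf hev hbddg hcobf
end
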